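/- On the 1-jet space J¹(ℝ,ℝⁿ) with time metric h₁₁ = 1, consider the Lagrangian L(t,x,y) = m·c·φ_{ij}(x)·y^i·y^j + (2e/m)·A_i(x)·y^i + 𝓕(t,x), where φ_{ij} is a smooth symmetric everywhere-invertible matrix field, A_i is smooth, 𝓕 is smooth, and m·c ≠ 0, m ≠ 0. Let g_{ij} = (1/2)·∂²L/∂y^i∂y^j = m·c·φ_{ij}, let G^{(i)} = (g^{is}/4)·[∂²L/∂x^q∂y^s·y^q − ∂L/∂x^s + ∂²L/∂t∂y^s] be the canonical semispray, N^{(i)}_{(1)j} = ∂G^{(i)}/∂y^j the nonlinear connection, and L^i_{jk} = (g^{is}/2)·(δg_{js}/δx^k + δg_{ks}/δx^j − δg_{jk}/δx^s) with δ/δx^k = ∂/∂x^k − N^{(q)}_{(1)k}·∂/∂y^q. Then the electromagnetic components F^{(1)}_{(i)j} = (1/2)·[g_{js}·N^{(s)}_{(1)i} − g_{is}·N^{(s)}_{(1)j} + (g_{iq}·L^q_{js} − g_{jq}·L^q_{is})·y^s] satisfy F^{(1)}_{(i)j} = −(e/(2m))·(∂A_i/∂x^j − ∂A_j/∂x^i)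 for all i,j ∈ {1,…,n}. -/

import Mathlib

/-- The electrodynamics jet Lagrangian
L(t,x,y) = m·c·φ_{ij}(x)y^i y^j + (2e/m)·A_i(x)y^i + 𝓕(t,x), with time metric h₁₁ = 1. -/
noncomputable def LagED (n : ℕ) (m c e : ℝ) (φm : (Fin n → ℝ) → Matrix (Fin n) (Fin n) ℝ)
    (A : (Fin n → ℝ) → Fin n → ℝ) (F0 : ℝ → (Fin n → ℝ) → ℝ)
    (t : ℝ) (x y : Fin n → ℝ) : ℝ :=
  m * c * (∑ i : Fin n, ∑ j : Fin n, φm x i j * y i * y j)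
    + 2 * e / m * (∑ i : Fin n, A x i * y i) + F0 t x

/-- ∂F/∂y^s for a function F(t,x,y) on the 1-jet space. -/
noncomputable def pdy (n : ℕ) (s : Fin n) (F : ℝ → (Fin n → ℝ) → (Fin n → ℝ) → ℝ)
    (t : ℝ) (x y : Fin n → ℝ) : ℝ :=
  deriv (fun a => F t x (Function.update y s a)) (y s)

/-- ∂F/∂x^q for a function F(t,x,y) on the 1-jet space. -/
noncomputable def pdx (n : ℕ) (q : Fin n) (F : ℝ → (Fin n → ℝ) → (Fin n → ℝ) → ℝ)
    (t : ℝ) (x y : Fin n → ℝ) : ℝ :=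
  deriv (fun a => F t (Function.update x q a) y) (x q)

/-- ∂F/∂t for a function F(t,x,y) on the 1-jet space. -/
noncomputable def pdt (n : ℕ) (F : ℝ → (Fin n → ℝ) → (Fin n → ℝ) → ℝ)
    (t : ℝ) (x y : Fin n → ℝ) : ℝ :=
  deriv (fun a => F a x y) t

/-- The fundamental metric g_{ij} = (1/2)∂²L/∂y^i∂y^j = m·c·φ_{ij}, as a matrix. -/
noncomputable def gmatED (n : ℕ) (m c : ℝ) (φm : (Fin n → ℝ) → Matrix (Fin n) (Fin n) ℝ)
    (x : Fin n → ℝ) : Matrix (Fin n) (Fin n) ℝ :=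
  (m * c) • φm x

/-- The canonical semispray
G^{(i)} = (g^{is}/4)[∂²L/∂x^q∂y^s·y^q − ∂L/∂x^s + ∂²L/∂t∂y^s]. -/
noncomputable def GsemED (n : ℕ) (m c e : ℝ) (φm : (Fin n → ℝ) → Matrix (Fin n) (Fin n) ℝ)
    (A : (Fin n → ℝ) → Fin n → ℝ) (F0 : ℝ → (Fin n → ℝ) → ℝ)
    (i : Fin n) (t : ℝ) (x y : Fin n → ℝ) : ℝ :=
  ∑ s : Fin n, (gmatED n m c φm x)⁻¹ i s / 4 *
    ((∑ q : Fin n, pdx n q (fun t' x' y' => pdy n s (LagED n m c e φm A F0) t' x' y') t x y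
        * y q)
      - pdx n s (LagED n m c e φm A F0) t x y
      + pdt n (fun t' x' y' => pdy n s (LagED n m c e φm A F0) t' x' y') t x y)

/-- The canonical nonlinear connection N^{(i)}_{(1)j} = ∂G^{(i)}/∂y^j. -/
noncomputable def NconnED (n : ℕ) (m c e : ℝ) (φm : (Fin n → ℝ) → Matrix (Fin n) (Fin n) ℝ)
    (A : (Fin n → ℝ) → Fin n → ℝ) (F0 : ℝ → (Fin n → ℝ) → ℝ)
    (i j : Fin n) (t : ℝ) (x y : Fin n → ℝ) : ℝ :=
  pdy n j (fun t' x' y' => GsemED n m c e φm A F0 i t' x' y') t x y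

/-- The horizontal derivative δF/δx^k = ∂F/∂x^k − N^{(q)}_{(1)k}·∂F/∂y^q. -/
noncomputable def delED (n : ℕ) (m c e : ℝ) (φm : (Fin n → ℝ) → Matrix (Fin n) (Fin n) ℝ)
    (A : (Fin n → ℝ) → Fin n → ℝ) (F0 : ℝ → (Fin n → ℝ) → ℝ) (k : Fin n)
    (F : ℝ → (Fin n → ℝ) → (Fin n → ℝ) → ℝ) (t : ℝ) (x y : Fin n → ℝ) : ℝ :=
  pdx n k F t x y
    - ∑ q : Fin n, NconnED n m c e φm A F0 q k t x y * pdy n q F t x y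

/-- The spatial Cartan coefficients
L^i_{jk} = (g^{is}/2)(δg_{js}/δx^k + δg_{ks}/δx^j − δg_{jk}/δx^s). -/
noncomputable def LcoefED (n : ℕ) (m c e : ℝ) (φm : (Fin n → ℝ) → Matrix (Fin n) (Fin n) ℝ)
    (A : (Fin n → ℝ) → Fin n → ℝ) (F0 : ℝ → (Fin n → ℝ) → ℝ)
    (i j k : Fin n) (t : ℝ) (x y : Fin n → ℝ) : ℝ :=
  ∑ s : Fin n, (gmatED n m c φm x)⁻¹ i s / 2 *
    (delED n m c e φm A F0 k (fun _ x' _ => gmatED n m c φm x' j s) t x y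
      + delED n m c e φm A F0 j (fun _ x' _ => gmatED n m c φm x' k s) t x y
      - delED n m c e φm A F0 s (fun _ x' _ => gmatED n m c φm x' j k) t x y)

/-- The electromagnetic components
F^{(1)}_{(i)j} = (1/2)[g_{js}N^{(s)}_{(1)i} − g_{is}N^{(s)}_{(1)j}
  + (g_{iq}L^q_{js} − g_{jq}L^q_{is})y^s]. -/
noncomputable def FemED (n : ℕ) (m c e : ℝ) (φm : (Fin n → ℝ) → Matrix (Fin n) (Fin n) ℝ)
    (A : (Fin n → ℝ) → Fin n → ℝ) (F0 : ℝ → (Fin n → ℝ) → ℝ)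
    (i j : Fin n) (t : ℝ) (x y : Fin n → ℝ) : ℝ :=
  1 / 2 * ((∑ s : Fin n, gmatED n m c φm x j s * NconnED n m c e φm A F0 s i t x y)
    - (∑ s : Fin n, gmatED n m c φm x i s * NconnED n m c e φm A F0 s j t x y)
    + ∑ s : Fin n, (∑ q : Fin n,
        (gmatED n m c φm x i q * LcoefED n m c e φm A F0 q j s t x y
          - gmatED n m c φm x j q * LcoefED n m c e φm A F0 q i s t x y))
        * y s)

theorem aux_upd {n : ℕ} (y : Fin n → ℝ) (s i : Fin n) (b : ℝ) :
    HasDerivAt (fun a : ℝ => Function.update y s a i) (if i = s then 1 else 0) b := by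
  rcases eq_or_ne i s with h | h
  · subst h
    simp only [Function.update_self, if_pos rfl]
    exact hasDerivAt_id b
  · simp only [Function.update_of_ne h, if_neg h]
    exact hasDerivAt_const b (y i)

theorem aux_lin {n : ℕ} (v y : Fin n → ℝ) (s : Fin n) :
    HasDerivAt (fun a : ℝ => ∑ p : Fin n, v p * Function.update y s a p) (v s) (y s) := by
  have h := HasDerivAt.fun_sum (fun p (_ : p ∈ Finset.univ) => (aux_upd y s p (y s)).const_mul (v p))
  simpa [mul_ite, Finset.sum_ite_eq'] using h

theorem aux_quad1 {n : ℕ} (M : Fin n → Fin n → ℝ) (y : Fin n → ℝ) (s : Fin n) :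
    HasDerivAt (fun a : ℝ => ∑ i : Fin n, ∑ j : Fin n,
        M i j * Function.update y s a i * Function.update y s a j)
      ((∑ j : Fin n, M s j * y j) + (∑ i : Fin n, M i s * y i)) (y s) := by
  have h := HasDerivAt.fun_sum (fun i (_ : i ∈ Finset.univ) => HasDerivAt.fun_sum
    (fun j (_ : j ∈ Finset.univ) =>
      ((aux_upd y s i (y s)).const_mul (M i j)).fun_mul (aux_upd y s j (y s))))
  simp only [Function.update_eq_self] at h
  refine h.congr_deriv ?_
  simp [mul_ite, ite_mul, Finset.sum_add_distrib, Finset.sum_ite_eq, Finset.sum_ite_eq',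
    Finset.sum_ite_irrel]

theorem aux_quad2 {n : ℕ} (M : Fin n → Fin n → ℝ) (y : Fin n → ℝ) (s : Fin n) :
    HasDerivAt (fun a : ℝ => ∑ q : Fin n, ∑ p : Fin n,
        M q p * Function.update y s a p * Function.update y s a q)
      ((∑ q : Fin n, M q s * y q) + (∑ p : Fin n, M s p * y p)) (y s) := by
  have h := HasDerivAt.fun_sum (fun q (_ : q ∈ Finset.univ) => HasDerivAt.fun_sum
    (fun p (_ : p ∈ Finset.univ) =>
      ((aux_upd y s p (y s)).const_mul (M q p)).fun_mul (aux_upd y s q (y s))))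
  simp only [Function.update_eq_self] at h
  refine h.congr_deriv ?_
  simp [mul_ite, ite_mul, Finset.sum_add_distrib, Finset.sum_ite_eq, Finset.sum_ite_eq',
    Finset.sum_ite_irrel]

theorem aux_updline {n : ℕ} (x : Fin n → ℝ) (q : Fin n) :
    Differentiable ℝ (fun a : ℝ => Function.update x q a) := by
  rw [differentiable_pi]
  intro i a
  exact (aux_upd x q i a).differentiableAt


/-- ∂φ_{ij}/∂x^q at the point x. -/
noncomputable def dphi (n : ℕ) (φm : (Fin n → ℝ) → Matrix (Fin n) (Fin n) ℝ)
    (x : Fin n → ℝ) (q i j : Fin n) : ℝ :=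
  deriv (fun a => φm (Function.update x q a) i j) (x q)

/-- ∂A_i/∂x^q at the point x. -/
noncomputable def dAx (n : ℕ) (A : (Fin n → ℝ) → Fin n → ℝ)
    (x : Fin n → ℝ) (q i : Fin n) : ℝ :=
  deriv (fun a => A (Function.update x q a) i) (x q)

/-- ∂𝓕/∂x^q at the point (t,x). -/
noncomputable def dFx (n : ℕ) (F0 : ℝ → (Fin n → ℝ) → ℝ)
    (t : ℝ) (x : Fin n → ℝ) (q : Fin n) : ℝ :=
  deriv (fun a => F0 t (Function.update x q a)) (x q)

section lag

variable {n : ℕ} {m c e : ℝ} {φm : (Fin n → ℝ) → Matrix (Fin n) (Fin n) ℝ}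
  {A : (Fin n → ℝ) → Fin n → ℝ} {F0 : ℝ → (Fin n → ℝ) → ℝ}

theorem pdyL (t : ℝ) (x y : Fin n → ℝ) (s : Fin n) :
    pdy n s (LagED n m c e φm A F0) t x y
      = m * c * ((∑ j : Fin n, φm x s j * y j) + (∑ i : Fin n, φm x i s * y i))
        + 2 * e / m * A x s := by
  have h := (((aux_quad1 (fun i j => φm x i j) y s).const_mul (m * c)).add
    ((aux_lin (fun i => A x i) y s).const_mul (2 * e / m))).add_const (F0 t x)
  exact h.deriv

theorem pdxL (hφ : ∀ i j : Fin n, ContDiff ℝ (⊤ : ℕ∞) fun x => φm x i j)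
    (hA : ∀ i : Fin n, ContDiff ℝ (⊤ : ℕ∞) fun x => A x i)
    (hF0 : ContDiff ℝ (⊤ : ℕ∞) fun q : ℝ × (Fin n → ℝ) => F0 q.1 q.2)
    (t : ℝ) (x y : Fin n → ℝ) (q : Fin n) :
    pdx n q (LagED n m c e φm A F0) t x y
      = m * c * (∑ p : Fin n, ∑ r : Fin n, dphi n φm x q p r * y p * y r)
        + 2 * e / m * (∑ p : Fin n, dAx n A x q p * y p) + dFx n F0 t x q := by
  have hφd : ∀ p r : Fin n, DifferentiableAt ℝ
      (fun a => φm (Function.update x q a) p r) (x q) := fun p r =>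
    (((hφ p r).differentiable (by simp)).comp (aux_updline x q)).differentiableAt
  have hAd : ∀ p : Fin n, DifferentiableAt ℝ
      (fun a => A (Function.update x q a) p) (x q) := fun p =>
    (((hA p).differentiable (by simp)).comp (aux_updline x q)).differentiableAt
  have hFd : DifferentiableAt ℝ (fun a => F0 t (Function.update x q a)) (x q) :=
    ((hF0.differentiable (by simp)).comp
      ((differentiable_const t).prodMk (aux_updline x q))).differentiableAt
  have h := (((HasDerivAt.fun_sum (fun p (_ : p ∈ Finset.univ) => HasDerivAt.fun_sum
      (fun r (_ : r ∈ Finset.univ) =>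
        ((hφd p r).hasDerivAt.mul_const (y p)).mul_const (y r)))).const_mul (m * c)).add
    ((HasDerivAt.fun_sum (fun p (_ : p ∈ Finset.univ) =>
      (hAd p).hasDerivAt.mul_const (y p))).const_mul (2 * e / m))).add hFd.hasDerivAt
  exact h.deriv

theorem pdxpdyL (hφ : ∀ i j : Fin n, ContDiff ℝ (⊤ : ℕ∞) fun x => φm x i j)
    (hA : ∀ i : Fin n, ContDiff ℝ (⊤ : ℕ∞) fun x => A x i)
    (t : ℝ) (x y : Fin n → ℝ) (q s : Fin n) :
    pdx n q (fun t' x' y' => pdy n s (LagED n m c e φm A F0) t' x' y') t x y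
      = m * c * ((∑ p : Fin n, dphi n φm x q s p * y p)
          + (∑ p : Fin n, dphi n φm x q p s * y p))
        + 2 * e / m * dAx n A x q s := by
  have hφd : ∀ p r : Fin n, DifferentiableAt ℝ
      (fun a => φm (Function.update x q a) p r) (x q) := fun p r =>
    (((hφ p r).differentiable (by simp)).comp (aux_updline x q)).differentiableAt
  have hAd : ∀ p : Fin n, DifferentiableAt ℝ
      (fun a => A (Function.update x q a) p) (x q) := fun p =>
    (((hA p).differentiable (by simp)).comp (aux_updline x q)).differentiableAt
  have hfe : (fun a => pdy n s (LagED n m c e φm A F0) t (Function.update x q a) y)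
      = fun a => m * c * ((∑ p : Fin n, φm (Function.update x q a) s p * y p)
          + (∑ p : Fin n, φm (Function.update x q a) p s * y p))
        + 2 * e / m * A (Function.update x q a) s :=
    funext fun a => pdyL t (Function.update x q a) y s
  show deriv _ _ = _
  rw [hfe]
  have h := (((HasDerivAt.fun_sum (fun p (_ : p ∈ Finset.univ) =>
      (hφd s p).hasDerivAt.mul_const (y p))).add
    (HasDerivAt.fun_sum (fun p (_ : p ∈ Finset.univ) =>
      (hφd p s).hasDerivAt.mul_const (y p)))).const_mul (m * c)).add
    ((hAd s).hasDerivAt.const_mul (2 * e / m))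
  exact h.deriv

theorem pdtpdyL (t : ℝ) (x y : Fin n → ℝ) (s : Fin n) :
    pdt n (fun t' x' y' => pdy n s (LagED n m c e φm A F0) t' x' y') t x y = 0 := by
  have hfe : (fun a => pdy n s (LagED n m c e φm A F0) a x y)
      = fun _ => m * c * ((∑ j : Fin n, φm x s j * y j) + (∑ i : Fin n, φm x i s * y i))
        + 2 * e / m * A x s :=
    funext fun a => pdyL a x y s
  show deriv _ _ = _
  rw [hfe, deriv_const]

end lag

theorem brac_alg {n : ℕ} (mc em : ℝ) (dφ : Fin n → Fin n → Fin n → ℝ)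
    (dA : Fin n → Fin n → ℝ) (dF : Fin n → ℝ) (y : Fin n → ℝ) (s : Fin n) :
    (∑ q : Fin n, (mc * ((∑ p : Fin n, dφ q s p * y p) + (∑ p : Fin n, dφ q p s * y p))
        + em * dA q s) * y q)
      - (mc * (∑ p : Fin n, ∑ r : Fin n, dφ s p r * y p * y r)
        + em * (∑ p : Fin n, dA s p * y p) + dF s) + 0
    = (∑ q : Fin n, ∑ p : Fin n, (mc * (dφ q s p + dφ q p s - dφ s p q)) * y p * y q)
      + ((∑ p : Fin n, (em * (dA p s - dA s p)) * y p) + (- dF s)) := by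
  have hc : (∑ p : Fin n, ∑ r : Fin n, dφ s p r * y p * y r)
      = ∑ r : Fin n, ∑ p : Fin n, dφ s p r * y p * y r := Finset.sum_comm
  rw [hc]
  simp only [Finset.mul_sum, Finset.sum_mul, mul_add, add_mul, sub_mul, mul_sub,
    Finset.sum_add_distrib, Finset.sum_sub_distrib, add_zero]
  ring_nf

theorem Gclosed {n : ℕ} {m c e : ℝ} {φm : (Fin n → ℝ) → Matrix (Fin n) (Fin n) ℝ}
    {A : (Fin n → ℝ) → Fin n → ℝ} {F0 : ℝ → (Fin n → ℝ) → ℝ}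
    (hφ : ∀ i j : Fin n, ContDiff ℝ (⊤ : ℕ∞) fun x => φm x i j)
    (hA : ∀ i : Fin n, ContDiff ℝ (⊤ : ℕ∞) fun x => A x i)
    (hF0 : ContDiff ℝ (⊤ : ℕ∞) fun q : ℝ × (Fin n → ℝ) => F0 q.1 q.2)
    (i : Fin n) (t : ℝ) (x y : Fin n → ℝ) :
    GsemED n m c e φm A F0 i t x y
      = ∑ s : Fin n, (gmatED n m c φm x)⁻¹ i s / 4 *
          ((∑ q : Fin n, ∑ p : Fin n,
              (m * c * (dphi n φm x q s p + dphi n φm x q p s - dphi n φm x s p q))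
                * y p * y q)
            + ((∑ p : Fin n, (2 * e / m * (dAx n A x p s - dAx n A x s p)) * y p)
              + (- dFx n F0 t x s))) := by
  unfold GsemED
  refine Finset.sum_congr rfl fun s _ => ?_
  congr 1
  rw [pdxL hφ hA hF0 t x y s, pdtpdyL t x y s]
  rw [Finset.sum_congr rfl fun q (_ : q ∈ Finset.univ) => by rw [pdxpdyL hφ hA t x y q s]]
  exact brac_alg (m * c) (2 * e / m) (dphi n φm x) (dAx n A x) (dFx n F0 t x) y s

theorem Nclosed {n : ℕ} {m c e : ℝ} {φm : (Fin n → ℝ) → Matrix (Fin n) (Fin n) ℝ}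
    {A : (Fin n → ℝ) → Fin n → ℝ} {F0 : ℝ → (Fin n → ℝ) → ℝ}
    (hφ : ∀ i j : Fin n, ContDiff ℝ (⊤ : ℕ∞) fun x => φm x i j)
    (hA : ∀ i : Fin n, ContDiff ℝ (⊤ : ℕ∞) fun x => A x i)
    (hF0 : ContDiff ℝ (⊤ : ℕ∞) fun q : ℝ × (Fin n → ℝ) => F0 q.1 q.2)
    (i j : Fin n) (t : ℝ) (x y : Fin n → ℝ) :
    NconnED n m c e φm A F0 i j t x y
      = ∑ s : Fin n, (gmatED n m c φm x)⁻¹ i s / 4 *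
          (((∑ q : Fin n,
              (m * c * (dphi n φm x q s j + dphi n φm x q j s - dphi n φm x s j q)) * y q)
            + (∑ p : Fin n,
              (m * c * (dphi n φm x j s p + dphi n φm x j p s - dphi n φm x s p j)) * y p))
            + (2 * e / m * (dAx n A x j s - dAx n A x s j))) := by
  have hfe : (fun b => GsemED n m c e φm A F0 i t x (Function.update y j b))
      = fun b => ∑ s : Fin n, (gmatED n m c φm x)⁻¹ i s / 4 *
          ((∑ q : Fin n, ∑ p : Fin n,
              (m * c * (dphi n φm x q s p + dphi n φm x q p s - dphi n φm x s p q))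
                * Function.update y j b p * Function.update y j b q)
            + ((∑ p : Fin n, (2 * e / m * (dAx n A x p s - dAx n A x s p))
                * Function.update y j b p)
              + (- dFx n F0 t x s))) :=
    funext fun b => Gclosed hφ hA hF0 i t x (Function.update y j b)
  show deriv _ _ = _
  rw [hfe]
  have h := HasDerivAt.fun_sum (u := Finset.univ) (x := y j)
    (A' := fun s => (gmatED n m c φm x)⁻¹ i s / 4 *
          (((∑ q : Fin n,
              (m * c * (dphi n φm x q s j + dphi n φm x q j s - dphi n φm x s j q)) * y q)
            + (∑ p : Fin n,
              (m * c * (dphi n φm x j s p + dphi n φm x j p s - dphi n φm x s p j)) * y p))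
            + (2 * e / m * (dAx n A x j s - dAx n A x s j))))
    (fun s _ => by
      have h1 := aux_quad2 (fun q p =>
          m * c * (dphi n φm x q s p + dphi n φm x q p s - dphi n φm x s p q)) y j
      have h2 := (aux_lin (fun p => 2 * e / m * (dAx n A x p s - dAx n A x s p)) y j).add_const
        (- dFx n F0 t x s)
      exact (h1.add h2).const_mul ((gmatED n m c φm x)⁻¹ i s / 4))
  exact h.deriv

theorem delG {n : ℕ} {m c e : ℝ} {φm : (Fin n → ℝ) → Matrix (Fin n) (Fin n) ℝ}
    {A : (Fin n → ℝ) → Fin n → ℝ} {F0 : ℝ → (Fin n → ℝ) → ℝ}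
    (hφ : ∀ i j : Fin n, ContDiff ℝ (⊤ : ℕ∞) fun x => φm x i j)
    (k j s : Fin n) (t : ℝ) (x y : Fin n → ℝ) :
    delED n m c e φm A F0 k (fun _ x' _ => gmatED n m c φm x' j s) t x y
      = m * c * dphi n φm x k j s := by
  have hφd : DifferentiableAt ℝ (fun a => φm (Function.update x k a) j s) (x k) :=
    (((hφ j s).differentiable (by simp)).comp (aux_updline x k)).differentiableAt
  have h1 : pdx n k (fun _ x' _ => gmatED n m c φm x' j s) t x y
      = m * c * dphi n φm x k j s := by
    show deriv _ _ = _
    have hfe : (fun a => gmatED n m c φm (Function.update x k a) j s)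
        = fun a => m * c * φm (Function.update x k a) j s := by
      funext a; simp [gmatED]
    show deriv (fun a => gmatED n m c φm (Function.update x k a) j s) (x k) = _
    rw [hfe]
    exact (hφd.hasDerivAt.const_mul (m * c)).deriv
  have h2 : ∀ q : Fin n, pdy n q (fun _ x' _ => gmatED n m c φm x' j s) t x y = 0 := by
    intro q
    show deriv (fun _ => gmatED n m c φm x j s) (y q) = 0
    exact deriv_const _ _
  unfold delED
  rw [h1]
  simp [h2]

theorem Lclosed {n : ℕ} {m c e : ℝ} {φm : (Fin n → ℝ) → Matrix (Fin n) (Fin n) ℝ}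
    {A : (Fin n → ℝ) → Fin n → ℝ} {F0 : ℝ → (Fin n → ℝ) → ℝ}
    (hφ : ∀ i j : Fin n, ContDiff ℝ (⊤ : ℕ∞) fun x => φm x i j)
    (i j k : Fin n) (t : ℝ) (x y : Fin n → ℝ) :
    LcoefED n m c e φm A F0 i j k t x y
      = ∑ s : Fin n, (gmatED n m c φm x)⁻¹ i s / 2 *
          (m * c * dphi n φm x k j s + m * c * dphi n φm x j k s
            - m * c * dphi n φm x s j k) := by
  unfold LcoefED
  exact Finset.sum_congr rfl fun s _ => by
    rw [delG hφ k j s t x y, delG hφ j k s t x y, delG hφ s j k t x y]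

theorem ginv_contract {n : ℕ} {m c : ℝ} (hmc : m * c ≠ 0)
    (φm : (Fin n → ℝ) → Matrix (Fin n) (Fin n) ℝ)
    (hφinv : ∀ x : Fin n → ℝ, IsUnit (φm x).det) (x : Fin n → ℝ)
    (d : ℝ) (j : Fin n) (X : Fin n → ℝ) :
    ∑ s : Fin n, gmatED n m c φm x j s *
        (∑ p : Fin n, (gmatED n m c φm x)⁻¹ s p / d * X p) = X j / d := by
  have hdet : IsUnit (gmatED n m c φm x).det := by
    rw [gmatED, Matrix.det_smul]
    exact ((isUnit_iff_ne_zero.2 hmc).pow _).mul (hφinv x)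
  have hmul : gmatED n m c φm x * (gmatED n m c φm x)⁻¹ = 1 :=
    Matrix.mul_nonsing_inv _ hdet
  have hent : ∀ p : Fin n,
      (∑ s : Fin n, gmatED n m c φm x j s * (gmatED n m c φm x)⁻¹ s p)
        = if j = p then 1 else 0 := by
    intro p
    have h2 : (gmatED n m c φm x * (gmatED n m c φm x)⁻¹) j p
        = (1 : Matrix (Fin n) (Fin n) ℝ) j p := by rw [hmul]
    rw [Matrix.mul_apply, Matrix.one_apply] at h2
    exact h2
  calc ∑ s : Fin n, gmatED n m c φm x j s *
        (∑ p : Fin n, (gmatED n m c φm x)⁻¹ s p / d * X p)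
      = ∑ p : Fin n, (∑ s : Fin n, gmatED n m c φm x j s * (gmatED n m c φm x)⁻¹ s p)
          * (X p / d) := by
        simp only [Finset.mul_sum]
        rw [Finset.sum_comm]
        refine Finset.sum_congr rfl fun p _ => ?_
        rw [Finset.sum_mul]
        refine Finset.sum_congr rfl fun s _ => ?_
        ring
    _ = X j / d := by
        rw [Finset.sum_congr rfl fun p (_ : p ∈ Finset.univ) => by rw [hent p]]
        simp [ite_mul, Finset.sum_ite_eq]
/-- for the electrodynamics Lagrangian on J¹(ℝ,ℝⁿ), the electromagnetic
components reduce to F^{(1)}_{(i)j} = −(e/(2m))(∂A_i/∂x^j − ∂A_j/∂x^i). -/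
theorem stmt16 (n : ℕ) (m c e : ℝ) (hm : m ≠ 0) (hmc : m * c ≠ 0)
    (φm : (Fin n → ℝ) → Matrix (Fin n) (Fin n) ℝ)
    (hφsmooth : ∀ i j : Fin n, ContDiff ℝ (⊤ : ℕ∞) (fun x => φm x i j))
    (hφsymm : ∀ (x : Fin n → ℝ) (i j : Fin n), φm x i j = φm x j i)
    (hφinv : ∀ x : Fin n → ℝ, IsUnit (φm x).det)
    (A : (Fin n → ℝ) → Fin n → ℝ) (hA : ∀ i : Fin n, ContDiff ℝ (⊤ : ℕ∞) (fun x => A x i))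
    (F0 : ℝ → (Fin n → ℝ) → ℝ)
    (hF0 : ContDiff ℝ (⊤ : ℕ∞) (fun q : ℝ × (Fin n → ℝ) => F0 q.1 q.2))
    (t : ℝ) (x y : Fin n → ℝ) :
    ∀ i j : Fin n,
      FemED n m c e φm A F0 i j t x y
        = -(e / (2 * m)) * (deriv (fun b => A (Function.update x j b) i) (x j)
            - deriv (fun b => A (Function.update x i b) j) (x i)) := by

  intro i j
  have hdsym : ∀ q a b : Fin n, dphi n φm x q a b = dphi n φm x q b a := by
    intro q a b
    unfold dphi
    congr 1
    funext z
    exact hφsymm _ a b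
  show FemED n m c e φm A F0 i j t x y
      = -(e / (2 * m)) * (dAx n A x j i - dAx n A x i j)
  unfold FemED
  simp only [Nclosed hφsmooth hA hF0, Lclosed hφsmooth, Finset.sum_sub_distrib,
    ginv_contract hmc φm hφinv x]
  have hzero :
      (∑ q : Fin n, m * c * (dphi n φm x q j i + dphi n φm x q i j - dphi n φm x j i q) * y q)
        + (∑ p : Fin n, m * c * (dphi n φm x i j p + dphi n φm x i p j - dphi n φm x j p i) * y p)
        - (∑ q : Fin n, m * c * (dphi n φm x q i j + dphi n φm x q j i - dphi n φm x i j q) * y q)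
        - (∑ p : Fin n, m * c * (dphi n φm x j i p + dphi n φm x j p i - dphi n φm x i p j) * y p)
        + 4 * ∑ s : Fin n,
            ((m * c * dphi n φm x s j i + m * c * dphi n φm x j s i
                - m * c * dphi n φm x i j s) / 2
              - (m * c * dphi n φm x s i j + m * c * dphi n φm x i s j
                - m * c * dphi n φm x j i s) / 2) * y s
        = 0 := by
    rw [← Finset.sum_add_distrib, ← Finset.sum_sub_distrib, ← Finset.sum_sub_distrib,
      Finset.mul_sum, ← Finset.sum_add_distrib]
    refine Finset.sum_eq_zero fun q _ => ?_
    linear_combination (2 * (m * c) * y q) * hdsym q j i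
  linear_combination hzero / 8
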